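/- Fix α > 0 and define for i < j: E[φ_i] = (2p/(i+1)) b_{n,2α}/b_{i,2α}, E[φ_i²] = (2p/(i+1)) b_{n,4α}/b_{i,4α}, E[φ_{i}φ_{j}] = (4p²/((i+1)(j+1))) (b_{n,4α}/b_{j,4α})(b_{j,2α}/b_{i,2α}). Then E[φ_iφ_j] - E[φ_i]E[φ_j] = (4p²/((i+1)(j+1))) · (b_{n,4α} b_{j,2α}/(b_{i,2α} b_{j,2α}²)) · Σ_{m=j+1}^{n} (b_{m,2α}²/b_{m,4α}) · 4α²/(m(m+4α)) ≥ 0. -/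
import Mathlib


open scoped BigOperators

/-- `b m x = ∏_{k=1}^m k/(k+x)` (with `b 0 x = 1`). -/
noncomputable def b (m : ℕ) (x : ℝ) : ℝ := ∏ k ∈ Finset.Icc 1 m, (k : ℝ) / (k + x)

lemma b_pos (m : ℕ) {x : ℝ} (hx : 0 < x) : 0 < b m x := by
  refine Finset.prod_pos fun k hk => div_pos ?_ ?_
  · have := (Finset.mem_Icc.mp hk).1; positivity
  · have h1 := (Finset.mem_Icc.mp hk).1
    have : (0:ℝ) < k := by exact_mod_cast Nat.lt_of_lt_of_le Nat.zero_lt_one h1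
    linarith

lemma b_succ (m : ℕ) (x : ℝ) : b (m+1) x = b m x * ((m+1 : ℝ) / ((m+1 : ℝ) + x)) := by
  rw [b, b, Finset.prod_Icc_succ_top (by omega)]
  push_cast
  ring

lemma key (α : ℝ) (hα : 0 < α) (j : ℕ) : ∀ n, j ≤ n →
    b n (4*α) * (b j (2*α))^2 - (b n (2*α))^2 * b j (4*α)
      = b n (4*α) * b j (4*α) * ∑ m ∈ Finset.Icc (j+1) n,
          ((b m (2*α))^2 / b m (4*α)) * (4 * α^2 / ((m:ℝ) * ((m:ℝ) + 4*α))) := by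
  intro n hn
  induction n, hn using Nat.le_induction with
  | base => rw [Finset.Icc_eq_empty (by omega)]; simp; ring
  | succ n hn ih =>
      rw [Finset.sum_Icc_succ_top (by omega), b_succ n (4*α), b_succ n (2*α)]
      have h4 : (0:ℝ) < b n (4*α) := b_pos n (by linarith)
      have hN : (0:ℝ) < (n:ℝ) + 1 := by positivity
      have hN2 : (0:ℝ) < (n:ℝ) + 1 + 2*α := by linarith
      have hN4 : (0:ℝ) < (n:ℝ) + 1 + 4*α := by linarith
      push_cast
      have hc : ((n:ℝ)+1)/((n:ℝ)+1+4*α)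
          = (((n:ℝ)+1)/((n:ℝ)+1+2*α))^2
            + (((n:ℝ)+1)/((n:ℝ)+1+2*α))^2 * (4*α^2/(((n:ℝ)+1)*(((n:ℝ)+1)+4*α))) := by
        field_simp
        ring
      have hX : b n (4*α) * (((n:ℝ)+1)/((n:ℝ)+1+4*α)) * b j (4*α) *
            ((b n (2*α) * (((n:ℝ)+1)/((n:ℝ)+1+2*α)))^2
              / (b n (4*α) * (((n:ℝ)+1)/((n:ℝ)+1+4*α)))
              * (4*α^2/(((n:ℝ)+1)*(((n:ℝ)+1)+4*α))))
          = b j (4*α) * (b n (2*α))^2 * (((n:ℝ)+1)/((n:ℝ)+1+2*α))^2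
              * (4*α^2/(((n:ℝ)+1)*(((n:ℝ)+1)+4*α))) := by
        field_simp
      linear_combination (((n:ℝ)+1)/((n:ℝ)+1+4*α)) * ih
        + (b n (2*α))^2 * b j (4*α) * hc - hX

/-- With `E[φ_i] = (2p/(i+1))b_{n,2α}/b_{i,2α}` and
`E[φ_iφ_j] = (4p²/((i+1)(j+1)))(b_{n,4α}/b_{j,4α})(b_{j,2α}/b_{i,2α})` for `i < j`,
the covariance `E[φ_iφ_j] - E[φ_i]E[φ_j]` equals
`(4p²/((i+1)(j+1)))·(b_{n,4α}b_{j,2α}/(b_{i,2α}b_{j,2α}²))·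
 Σ_{m=j+1}^n (b_{m,2α}²/b_{m,4α})·4α²/(m(m+4α))` and is nonnegative. -/
theorem stmt_17 (α p : ℝ) (hα : 0 < α) (hp : 0 ≤ p) (hp1 : p ≤ 1)
    (n i j : ℕ) (hi : 1 ≤ i) (hij : i < j) (hjn : j ≤ n) :
    ((4 * p ^ 2 / (((i : ℝ) + 1) * ((j : ℝ) + 1))) *
        (b n (4 * α) / b j (4 * α)) * (b j (2 * α) / b i (2 * α))
      - ((2 * p / ((i : ℝ) + 1)) * (b n (2 * α) / b i (2 * α))) *
        ((2 * p / ((j : ℝ) + 1)) * (b n (2 * α) / b j (2 * α)))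
      = (4 * p ^ 2 / (((i : ℝ) + 1) * ((j : ℝ) + 1))) *
          (b n (4 * α) * b j (2 * α) / (b i (2 * α) * (b j (2 * α)) ^ 2)) *
          ∑ m ∈ Finset.Icc (j + 1) n,
            ((b m (2 * α)) ^ 2 / b m (4 * α)) *
              (4 * α ^ 2 / ((m : ℝ) * ((m : ℝ) + 4 * α)))) ∧
    0 ≤ (4 * p ^ 2 / (((i : ℝ) + 1) * ((j : ℝ) + 1))) *
          (b n (4 * α) / b j (4 * α)) * (b j (2 * α) / b i (2 * α))
      - ((2 * p / ((i : ℝ) + 1)) * (b n (2 * α) / b i (2 * α))) *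
        ((2 * p / ((j : ℝ) + 1)) * (b n (2 * α) / b j (2 * α))) := by
  have h2α : (0:ℝ) < 2 * α := by linarith
  have h4α : (0:ℝ) < 4 * α := by linarith
  have hi2 : 0 < b i (2*α) := b_pos i h2α
  have hj2 : 0 < b j (2*α) := b_pos j h2α
  have hj4 : 0 < b j (4*α) := b_pos j h4α
  have hn4 : 0 < b n (4*α) := b_pos n h4α
  have hk := key α hα j n hjn
  have hS : ∑ m ∈ Finset.Icc (j + 1) n,
      ((b m (2 * α)) ^ 2 / b m (4 * α)) * (4 * α ^ 2 / ((m : ℝ) * ((m : ℝ) + 4 * α)))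
      = (b n (4*α) * (b j (2*α))^2 - (b n (2*α))^2 * b j (4*α)) / (b n (4*α) * b j (4*α)) := by
    rw [eq_div_iff (by positivity)]
    linear_combination -hk
  have hsum : 0 ≤ ∑ m ∈ Finset.Icc (j + 1) n,
      ((b m (2 * α)) ^ 2 / b m (4 * α)) * (4 * α ^ 2 / ((m : ℝ) * ((m : ℝ) + 4 * α))) := by
    refine Finset.sum_nonneg fun m hm => ?_
    have hm1 : 1 ≤ m := le_trans (by omega) (Finset.mem_Icc.mp hm).1
    have hm0 : (0:ℝ) < m := by exact_mod_cast hm1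
    have hm4 : 0 < b m (4*α) := b_pos m h4α
    positivity
  have hiR : (0:ℝ) < (i:ℝ) + 1 := by positivity
  have hjR : (0:ℝ) < (j:ℝ) + 1 := by positivity
  constructor
  · rw [hS]
    field_simp
    ring
  · rw [show (4 * p ^ 2 / (((i : ℝ) + 1) * ((j : ℝ) + 1))) *
        (b n (4 * α) / b j (4 * α)) * (b j (2 * α) / b i (2 * α))
      - ((2 * p / ((i : ℝ) + 1)) * (b n (2 * α) / b i (2 * α))) *
        ((2 * p / ((j : ℝ) + 1)) * (b n (2 * α) / b j (2 * α)))
      = (4 * p ^ 2 / (((i : ℝ) + 1) * ((j : ℝ) + 1))) *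
          (b n (4 * α) * b j (2 * α) / (b i (2 * α) * (b j (2 * α)) ^ 2)) *
          ∑ m ∈ Finset.Icc (j + 1) n,
            ((b m (2 * α)) ^ 2 / b m (4 * α)) *
              (4 * α ^ 2 / ((m : ℝ) * ((m : ℝ) + 4 * α))) from by
        rw [hS]; field_simp; ring]
    have h1 : (0:ℝ) ≤ 4 * p ^ 2 / (((i : ℝ) + 1) * ((j : ℝ) + 1)) := by positivity
    have h2 : (0:ℝ) ≤ b n (4*α) * b j (2*α) / (b i (2*α) * (b j (2*α))^2) := by positivity
    exact mul_nonneg (mul_nonneg h1 h2) hsum
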